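/- Let d ≥ 1, v : ℝ^d → ℝ, l ∈ ℝ^d, h > 0, x ∈ ℝ^d, and let r ≥ 2 be an integer. Then |δ_{h,l}v(x)| ≤ (rh/2) · max{ |Δ_{h,l}v(x + i h l)| : |i| ≤ r } + (4/(rh)) · max{ |v(x + i h l)| : |i| ≤ r }. -/

import Mathlib

/-!
Restrict `v` to the lattice points `w i = v (x + i h l)`, `0 ≤ i ≤ r`, of the line through `x` in
direction `l`. Summing second differences twice gives the discrete Taylor formula
`w r - w 0 = r (w 1 - w 0) + R` with `|R| ≤ r (r - 1) / 2 · max |second differences|`, and solving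
for `w 1 - w 0` bounds the first difference by the second differences and the values of `w`.
-/

noncomputable section

/-- First-order finite difference `δ_{h,l}φ(x) = h⁻¹(φ(x+hl) − φ(x))`. -/
def deltaOp (d : ℕ) (h : ℝ) (l : Fin d → ℝ)
    (φ : (Fin d → ℝ) → ℝ) (x : Fin d → ℝ) : ℝ :=
  (φ (x + h • l) - φ x) / h

/-- Second-order finite difference
`Δ_{h,l}φ(x) = h⁻²(φ(x+hl) − 2φ(x) + φ(x−hl))`. -/
def DeltaOp (d : ℕ) (h : ℝ) (l : Fin d → ℝ)
    (φ : (Fin d → ℝ) → ℝ) (x : Fin d → ℝ) : ℝ :=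
  (φ (x + h • l) - 2 * φ x + φ (x - h • l)) / h ^ 2

namespace DiscreteInterpolation

variable {E : Type*} [SeminormedAddCommGroup E] {w : ℕ → E} {n : ℕ} {a : ℝ}

theorem norm_diff_sub_first_diff_le
    (hw : ∀ k, k + 2 ≤ n → ‖w (k + 2) - 2 • w (k + 1) + w k‖ ≤ a) :
    ∀ m, m + 1 ≤ n → ‖w (m + 1) - w m - (w 1 - w 0)‖ ≤ m * a := by
  intro m
  induction m with
  | zero => simp
  | succ m ih =>
    intro hm
    have hsplit : w (m + 2) - w (m + 1) - (w 1 - w 0)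
        = (w (m + 2) - 2 • w (m + 1) + w m) + (w (m + 1) - w m - (w 1 - w 0)) := by
      rw [two_nsmul]; abel
    calc ‖w (m + 1 + 1) - w (m + 1) - (w 1 - w 0)‖
        ≤ ‖w (m + 2) - 2 • w (m + 1) + w m‖ + ‖w (m + 1) - w m - (w 1 - w 0)‖ :=
          hsplit ▸ norm_add_le _ _
      _ ≤ a + m * a := add_le_add (hw m hm) (ih (by omega))
      _ = (m + 1 : ℕ) * a := by push_cast; ring

theorem norm_taylor_remainder_le [NormedSpace ℝ E]
    (hw : ∀ k, k + 2 ≤ n → ‖w (k + 2) - 2 • w (k + 1) + w k‖ ≤ a) :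
    ∀ m, m ≤ n → ‖w m - w 0 - (m : ℝ) • (w 1 - w 0)‖ ≤ m * (m - 1) / 2 * a := by
  intro m
  induction m with
  | zero => simp
  | succ m ih =>
    intro hm
    have hsplit : w (m + 1) - w 0 - ((m + 1 : ℕ) : ℝ) • (w 1 - w 0)
        = (w m - w 0 - (m : ℝ) • (w 1 - w 0)) + (w (m + 1) - w m - (w 1 - w 0)) := by
      rw [Nat.cast_succ, add_smul, one_smul]; abel
    rw [hsplit]
    calc _ ≤ ‖w m - w 0 - (m : ℝ) • (w 1 - w 0)‖ + ‖w (m + 1) - w m - (w 1 - w 0)‖ :=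
          norm_add_le _ _
      _ ≤ m * (m - 1) / 2 * a + m * a :=
          add_le_add (ih (by omega)) (norm_diff_sub_first_diff_le hw m hm)
      _ = _ := by push_cast; ring

/-- The discrete inequality (9.24.7). -/
theorem norm_first_diff_le [NormedSpace ℝ E] (hn : 0 < n) {B : ℝ}
    (hw : ∀ k, k + 2 ≤ n → ‖w (k + 2) - 2 • w (k + 1) + w k‖ ≤ a)
    (hB : ∀ i, i ≤ n → ‖w i‖ ≤ B) :
    ‖w 1 - w 0‖ ≤ (n - 1) / 2 * a + 2 / n * B := by
  have hn' : (0 : ℝ) < n := by exact_mod_cast hn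
  have hscaled : n * ‖w 1 - w 0‖ ≤ 2 * B + n * (n - 1) / 2 * a := by
    calc n * ‖w 1 - w 0‖ = ‖(n : ℝ) • (w 1 - w 0)‖ := by rw [norm_smul, Real.norm_natCast]
      _ = ‖(w n - w 0) - (w n - w 0 - (n : ℝ) • (w 1 - w 0))‖ := by rw [sub_sub_cancel]
      _ ≤ ‖w n‖ + ‖w 0‖ + ‖w n - w 0 - (n : ℝ) • (w 1 - w 0)‖ :=
          (norm_sub_le _ _).trans (add_le_add_left (norm_sub_le _ _) _)
      _ ≤ B + B + n * (n - 1) / 2 * a := by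
          gcongr
          exacts [hB n le_rfl, hB 0 (Nat.zero_le n), norm_taylor_remainder_le hw n le_rfl]
      _ = 2 * B + n * (n - 1) / 2 * a := by ring
  rw [← mul_le_mul_iff_of_pos_left hn']
  calc n * ‖w 1 - w 0‖ ≤ 2 * B + n * (n - 1) / 2 * a := hscaled
    _ = n * ((n - 1) / 2 * a + 2 / n * B) := by field_simp; ring

end DiscreteInterpolation

open DiscreteInterpolation

theorem sq_mul_DeltaOp_add_smul (d : ℕ) {h : ℝ} (hh : h ≠ 0) (l : Fin d → ℝ)
    (φ : (Fin d → ℝ) → ℝ) (x : Fin d → ℝ) (t : ℝ) :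
    h ^ 2 * DeltaOp d h l φ (x + t • h • l)
      = φ (x + (t + 1) • h • l) - 2 * φ (x + t • h • l) + φ (x + (t - 1) • h • l) := by
  rw [DeltaOp, mul_div_cancel₀ _ (pow_ne_zero 2 hh), add_smul, sub_smul, one_smul,
    ← add_assoc, ← add_sub_assoc]

/-- The maxima over `|i| ≤ r` are expressed through arbitrary upper bounds `A` and `B`. -/
theorem interpolation_along_direction_general
    (d : ℕ) (v : (Fin d → ℝ) → ℝ) (l : Fin d → ℝ)
    (h : ℝ) (hh : 0 < h) (x : Fin d → ℝ) (r : ℤ) (hr : 2 ≤ r) (A B : ℝ)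
    (hA : ∀ i : ℤ, |i| ≤ r → |DeltaOp d h l v (x + (i : ℝ) • h • l)| ≤ A)
    (hB : ∀ i : ℤ, |i| ≤ r → |v (x + (i : ℝ) • h • l)| ≤ B) :
    |deltaOp d h l v x| ≤ (r : ℝ) * h / 2 * A + 4 / ((r : ℝ) * h) * B := by
  obtain ⟨n, rfl⟩ : ∃ n : ℕ, r = n := ⟨r.toNat, by omega⟩
  have hA0 : 0 ≤ A := (abs_nonneg _).trans (hA 0 (by simp))
  have hB0 : 0 ≤ B := (abs_nonneg _).trans (hB 0 (by simp))
  set w : ℕ → ℝ := fun i => v (x + (i : ℝ) • h • l)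
  have hsecond : ∀ k, k + 2 ≤ n → ‖w (k + 2) - 2 • w (k + 1) + w k‖ ≤ h ^ 2 * A := by
    intro k hk
    have hline : w (k + 2) - 2 • w (k + 1) + w k
        = h ^ 2 * DeltaOp d h l v (x + ((k + 1 : ℤ) : ℝ) • h • l) := by
      rw [sq_mul_DeltaOp_add_smul d hh.ne']
      simp only [w, nsmul_eq_mul]
      push_cast
      ring_nf
    rw [hline, norm_mul, Real.norm_eq_abs, abs_of_pos (pow_pos hh 2)]
    exact mul_le_mul_of_nonneg_left (hA (k + 1) (by rw [abs_of_nonneg (by positivity)]; omega))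
      (by positivity)
  have hvalues : ∀ i, i ≤ n → ‖w i‖ ≤ B := fun i hi => by
    simpa [w] using hB i (by rw [Int.abs_natCast]; omega)
  have hδ : deltaOp d h l v x * h = w 1 - w 0 := by
    rw [deltaOp, div_mul_cancel₀ _ hh.ne']
    simp [w]
  have hn : (2 : ℝ) ≤ n := by exact_mod_cast hr
  rw [← mul_le_mul_iff_of_pos_right hh]
  calc |deltaOp d h l v x| * h = ‖w 1 - w 0‖ := by
        rw [← hδ, Real.norm_eq_abs, abs_mul, abs_of_pos hh]
    _ ≤ ((n : ℝ) - 1) / 2 * (h ^ 2 * A) + 2 / n * B :=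
        norm_first_diff_le (by omega) hsecond hvalues
    _ ≤ n / 2 * (h ^ 2 * A) + 4 / n * B := by gcongr <;> linarith
    _ = ((n : ℤ) * h / 2 * A + 4 / ((n : ℤ) * h) * B) * h := by push_cast; field_simp

/-- The interpolation inequality along a direction `l` used in the proofs of
Lemma 5.5 and Section 6 of Krylov, "An ersatz existence theorem for fully
nonlinear parabolic equations without convexity assumptions".  The maxima over
`|i| ≤ r` are expressed through arbitrary upper bounds `A` and `B`. -/
theorem interpolation_along_direction
    (d : ℕ) (hd : 1 ≤ d) (v : (Fin d → ℝ) → ℝ) (l : Fin d → ℝ)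
    (h : ℝ) (hh : 0 < h) (x : Fin d → ℝ) (r : ℤ) (hr : 2 ≤ r) (A B : ℝ)
    (hA : ∀ i : ℤ, |i| ≤ r → |DeltaOp d h l v (x + (i : ℝ) • h • l)| ≤ A)
    (hB : ∀ i : ℤ, |i| ≤ r → |v (x + (i : ℝ) • h • l)| ≤ B) :
    |deltaOp d h l v x| ≤ (r : ℝ) * h / 2 * A + 4 / ((r : ℝ) * h) * B :=
  interpolation_along_direction_general d v l h hh x r hr A B hA hB
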